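/- arXiv:1505.00281 — 6 statements merged into one kernel-verified Lean document; each statement's English description precedes it below -/
import Mathlib

section
/- If f and g are equivalent nondegenerate integral quadratic polynomials, then 𝔫₀(f) = 𝔫₀(g). -/
noncomputable section

open Matrix

/-- An `n`-ary quadratic polynomial over `ℚ`:
`f(x) = Q(x) + ℓ(x) + m` where `Q(x) = xᵀAx` for a symmetric matrix `A`,
`ℓ(x) = b ⬝ x` is a linear form and `m ∈ ℚ` is a constant. -/
structure QuadPoly (n : ℕ) where
  A : Matrix (Fin n) (Fin n) ℚ
  hA : A.IsSymm
  b : Fin n → ℚ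
  m : ℚ

namespace QuadPoly

variable {n : ℕ}

/-- Evaluation of `f` at a rational point. -/
def eval (f : QuadPoly n) (x : Fin n → ℚ) : ℚ :=
  x ⬝ᵥ f.A.mulVec x + f.b ⬝ᵥ x + f.m

/-- `f` is nondegenerate if its quadratic part is nondegenerate. -/
def Nondegenerate (f : QuadPoly n) : Prop := f.A.det ≠ 0

/-- For a nondegenerate `f`, the unique vector `v ∈ ℚⁿ` such that the linear part of `f`
equals `2B(v, x)`, where `B(x, y) = xᵀAy` is the symmetric bilinear form of the quadratic
part (so `2 A v = b`, i.e. `v = (1/2) A⁻¹ b`). -/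
def v (f : QuadPoly n) : Fin n → ℚ := (2 : ℚ)⁻¹ • f.A⁻¹.mulVec f.b

/-- `Q(v)`, the value of the quadratic part at `v`. -/
def Qv (f : QuadPoly n) : ℚ := f.v ⬝ᵥ f.A.mulVec f.v

/-- `f` is integral: `f(a) ∈ ℤ` for all `a ∈ ℤⁿ`. -/
def Integral (f : QuadPoly n) : Prop :=
  ∀ x : Fin n → ℤ, ∃ z : ℤ, f.eval (fun i => (x i : ℚ)) = (z : ℚ)

/-- `f` is primitive: it is integral and the set `{f(a) : a ∈ ℤⁿ}` generates the
ideal `ℤ`. -/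
def Primitive (f : QuadPoly n) : Prop :=
  f.Integral ∧
    Ideal.span {z : ℤ | ∃ x : Fin n → ℤ, f.eval (fun i => (x i : ℚ)) = (z : ℚ)} = ⊤

/-- `f` is positive: its quadratic part is positive definite and the minimum of `f` on `ℤⁿ`
is nonnegative. -/
def Positive (f : QuadPoly n) : Prop :=
  f.A.PosDef ∧ ∀ x : Fin n → ℤ, 0 ≤ f.eval (fun i => (x i : ℚ))

/-- `f` is complete: `f(x) = Q(x + v)`, i.e. its constant term equals `Q(v)`. -/
def Complete (f : QuadPoly n) : Prop := f.m = f.Qv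

/-- `c` is the conductor of `f`: the smallest positive integer with `c • v ∈ ℤⁿ`. -/
def IsConductor (f : QuadPoly n) (c : ℕ) : Prop :=
  0 < c ∧ (∀ i, ∃ z : ℤ, (c : ℚ) * f.v i = (z : ℚ)) ∧
    ∀ b : ℕ, 0 < b → (∀ i, ∃ z : ℤ, (b : ℚ) * f.v i = (z : ℚ)) → c ≤ b

/-- Evaluation of `f` (coefficients viewed in `ℚ_[p]`) at a `p`-adic point. -/
def evalPadic (f : QuadPoly n) (p : ℕ) [Fact p.Prime] (x : Fin n → ℚ_[p]) : ℚ_[p] :=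
  x ⬝ᵥ (f.A.map ((↑) : ℚ → ℚ_[p])).mulVec x
    + (fun i => ((f.b i : ℚ) : ℚ_[p])) ⬝ᵥ x + ((f.m : ℚ) : ℚ_[p])

/-- Evaluation of `f` (coefficients viewed in `ℝ`) at a real point. -/
def evalReal (f : QuadPoly n) (x : Fin n → ℝ) : ℝ :=
  x ⬝ᵥ (f.A.map ((↑) : ℚ → ℝ)).mulVec x
    + (fun i => ((f.b i : ℚ) : ℝ)) ⬝ᵥ x + ((f.m : ℚ) : ℝ)

/-- `f` is regular: for every `a ∈ ℚ`, the equation `f(x) = a` has a solution in `ℤⁿ`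
if and only if it has a solution in `ℤₚⁿ` for every prime `p` and a solution in `ℝⁿ`. -/
def Regular (f : QuadPoly n) : Prop :=
  ∀ a : ℚ,
    ((∀ (p : ℕ) [Fact p.Prime], ∃ x : Fin n → ℤ_[p],
        f.evalPadic p (fun i => (x i : ℚ_[p])) = (a : ℚ_[p])) ∧
      (∃ x : Fin n → ℝ, f.evalReal x = (a : ℝ)))
    ↔ ∃ x : Fin n → ℤ, f.eval (fun i => (x i : ℚ)) = a

/-- `g` is equivalent to `f`: `g(x) = f(xT + u)` for some `T ∈ GLₙ(ℤ)` and `u ∈ ℤⁿ`. -/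
def Equivalent (f g : QuadPoly n) : Prop :=
  ∃ T : Matrix (Fin n) (Fin n) ℤ, IsUnit T.det ∧ ∃ u : Fin n → ℤ,
    ∀ x : Fin n → ℚ,
      g.eval x = f.eval (x ᵥ* T.map ((↑) : ℤ → ℚ) + fun i => (u i : ℚ))

/-- `𝔫₀(f)`: the ideal of `ℤ` generated by the integer values of
`f₀(x) = Q(x) + 2B(v,x) = f(x) - m`. -/
def nZero (f : QuadPoly n) : Ideal ℤ :=
  Ideal.span {z : ℤ | ∃ x : Fin n → ℤ, f.eval (fun i => (x i : ℚ)) - f.m = (z : ℚ)}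

end QuadPoly


namespace QuadPoly

private lemma castVec_aux {n : ℕ} (T : Matrix (Fin n) (Fin n) ℤ) (x u : Fin n → ℤ) :
    (fun i => (((x ᵥ* T + u) i : ℤ) : ℚ)) =
      ((fun i => (x i : ℚ)) ᵥ* T.map ((↑) : ℤ → ℚ) + fun i => (u i : ℚ)) := by
  funext i
  simp [Matrix.vecMul, dotProduct, Matrix.map_apply]

private lemma eval_zero' {n : ℕ} (f : QuadPoly n) :
    f.eval (fun i => (((0 : Fin n → ℤ) i : ℤ) : ℚ)) = f.m := by
  simp [eval, dotProduct]

private lemma diff_mem {n : ℕ} (f : QuadPoly n) (hfi : f.Integral) (a b : Fin n → ℤ)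
    (z : ℤ)
    (hz : f.eval (fun i => (a i : ℚ)) - f.eval (fun i => (b i : ℚ)) = (z : ℚ)) :
    z ∈ f.nZero := by
  obtain ⟨za, hza⟩ := hfi a
  obtain ⟨zb, hzb⟩ := hfi b
  obtain ⟨zm, hzm⟩ := hfi 0
  rw [f.eval_zero'] at hzm
  have h1 : (za - zm : ℤ) ∈ f.nZero :=
    Ideal.subset_span ⟨a, by push_cast; rw [hza, hzm]⟩
  have h2 : (zb - zm : ℤ) ∈ f.nZero :=
    Ideal.subset_span ⟨b, by push_cast; rw [hzb, hzm]⟩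
  have hzz : z = (za - zm) - (zb - zm) := by
    have : (z : ℚ) = (((za - zm) - (zb - zm) : ℤ) : ℚ) := by
      push_cast
      rw [← hza, ← hzb] at *
      linarith [hz]
    exact_mod_cast this
  rw [hzz]
  exact sub_mem h1 h2

end QuadPoly

/-- If `f` and `g` are equivalent nondegenerate integral quadratic
polynomials, then `𝔫₀(f) = 𝔫₀(g)`. -/
theorem stmt_1 {n : ℕ} (f g : QuadPoly n)
    (hf : f.Nondegenerate) (hg : g.Nondegenerate)
    (hfi : f.Integral) (hgi : g.Integral)
    (h : f.Equivalent g) : f.nZero = g.nZero := by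
  obtain ⟨T, hT, u, heq⟩ := h
  haveI : Invertible T := T.invertibleOfIsUnitDet hT
  -- g values expressed via f
  have hx' : ∀ x : Fin n → ℤ,
      g.eval (fun i => (x i : ℚ)) = f.eval (fun i => (((x ᵥ* T + u) i : ℤ) : ℚ)) := by
    intro x
    rw [heq, QuadPoly.castVec_aux]
  -- f values expressed via g
  have hy' : ∀ y : Fin n → ℤ,
      f.eval (fun i => (y i : ℚ)) = g.eval (fun i => ((((y - u) ᵥ* ⅟T) i : ℤ) : ℚ)) := by
    intro y
    rw [hx' ((y - u) ᵥ* ⅟T)]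
    congr 1
    have : (y - u) ᵥ* ⅟T ᵥ* T + u = y := by
      rw [Matrix.vecMul_vecMul, invOf_mul_self, Matrix.vecMul_one, sub_add_cancel]
    rw [this]
  apply le_antisymm
  · rw [QuadPoly.nZero, Ideal.span_le]
    rintro z ⟨y, hy⟩
    have hm : f.m = g.eval (fun i => ((((0 - u) ᵥ* ⅟T) i : ℤ) : ℚ)) := by
      rw [← hy' 0, f.eval_zero']
    apply g.diff_mem hgi ((y - u) ᵥ* ⅟T) ((0 - u) ᵥ* ⅟T)
    rw [← hy' y, ← hm]
    exact hy
  · rw [QuadPoly.nZero, Ideal.span_le]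
    rintro z ⟨x, hx⟩
    have hm : g.m = f.eval (fun i => (((0 ᵥ* T + u) i : ℤ) : ℚ)) := by
      rw [← hx' 0, g.eval_zero']
    apply f.diff_mem hfi (x ᵥ* T + u) (0 ᵥ* T + u)
    rw [← hx' x, ← hm]
    exact hx
end
end

section
/- Let f(x) = Q(x) + 2B(v,x) + m be a nondegenerate integral quadratic polynomial with conductor c. Then 4c·Q(v) ∈ 𝔫₀(f). If, in addition, f is primitive and complete, then 4c ∈ 𝔫₀(f). -/
noncomputable section

open Matrix

/-- Let `f(x) = Q(x) + 2B(v,x) + m` be a nondegenerate integral quadratic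
polynomial with conductor `c`.  Then `4c·Q(v) ∈ 𝔫₀(f)`.  If, in addition, `f` is primitive
and complete, then `4c ∈ 𝔫₀(f)`. -/
theorem stmt_2 {n : ℕ} (f : QuadPoly n) (hnd : f.Nondegenerate) (hint : f.Integral)
    (c : ℕ) (hc : f.IsConductor c) :
    (∃ z : ℤ, (z : ℚ) = 4 * (c : ℚ) * f.Qv ∧ z ∈ f.nZero) ∧
    (f.Primitive → f.Complete → (4 * (c : ℤ)) ∈ f.nZero) := by
  classical
  -- the constant term is an integer
  obtain ⟨zm, hzm⟩ := hint 0
  have hm : f.m = (zm : ℚ) := by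
    have h0 : f.eval (fun i => (((0 : Fin n → ℤ)) i : ℚ)) = f.m := by
      simp [QuadPoly.eval]
    rw [← h0]; exact hzm
  -- integer values of f₀ lie in nZero
  have key : ∀ x : Fin n → ℤ, ∃ z : ℤ,
      (z : ℚ) = f.eval (fun i => (x i : ℚ)) - f.m ∧ z ∈ f.nZero := by
    intro x
    obtain ⟨z, hz⟩ := hint x
    refine ⟨z - zm, ?_, Ideal.subset_span ⟨x, ?_⟩⟩
    · push_cast; rw [hz, hm]
    · push_cast; rw [hz, hm]
  -- A v = (1/2) b
  have hAv : f.A.mulVec f.v = (2 : ℚ)⁻¹ • f.b := by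
    unfold QuadPoly.v
    rw [Matrix.mulVec_smul, Matrix.mulVec_mulVec,
      Matrix.mul_nonsing_inv _ (isUnit_iff_ne_zero.mpr hnd), Matrix.one_mulVec]
  have hbv : f.b ⬝ᵥ f.v = 2 * f.Qv := by
    have : f.Qv = (2 : ℚ)⁻¹ * (f.b ⬝ᵥ f.v) := by
      unfold QuadPoly.Qv
      rw [hAv, dotProduct_smul, smul_eq_mul, dotProduct_comm]
    rw [this]; ring
  -- the integer vector w = c • v
  choose w hw using hc.2.1
  set u : Fin n → ℚ := fun i => (w i : ℚ) with hu_def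
  have hu : u = (c : ℚ) • f.v := by
    funext i; simp [hu_def, ← hw i]
  have hneg : (fun i => ((-w) i : ℚ)) = -u := by
    funext i; simp [hu_def]
  have hdiff : f.eval u - f.eval (-u) = 4 * (c : ℚ) * f.Qv := by
    have h2 : f.eval u - f.eval (-u) = 2 * (f.b ⬝ᵥ u) := by
      simp only [QuadPoly.eval, Matrix.mulVec_neg, dotProduct_neg,
        neg_dotProduct, neg_neg]
      ring
    rw [h2, hu, dotProduct_smul, smul_eq_mul, hbv]
    ring
  obtain ⟨z1, hz1, hz1m⟩ := key w
  obtain ⟨z2, hz2, hz2m⟩ := key (-w)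
  rw [hneg] at hz2
  have hz0 : ((z1 - z2 : ℤ) : ℚ) = 4 * (c : ℚ) * f.Qv := by
    push_cast; rw [hz1, hz2]; linarith [hdiff]
  have hz0m : z1 - z2 ∈ f.nZero := sub_mem hz1m hz2m
  refine ⟨⟨z1 - z2, hz0, hz0m⟩, ?_⟩
  intro hprim hcompl
  set K : Ideal ℤ := Submodule.comap (LinearMap.lsmul ℤ ℤ (4 * (c : ℤ))) f.nZero with hK
  have hSK : {z : ℤ | ∃ x : Fin n → ℤ, f.eval (fun i => (x i : ℚ)) = (z : ℚ)} ⊆ K := by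
    rintro z ⟨x, hx⟩
    obtain ⟨z', hz', hz'm⟩ := key x
    have heq : 4 * (c : ℤ) * z = 4 * (c : ℤ) * z' + (z1 - z2) := by
      have : ((4 * (c : ℤ) * z : ℤ) : ℚ) = ((4 * (c : ℤ) * z' + (z1 - z2) : ℤ) : ℚ) := by
        push_cast
        rw [← hx]
        have hmq : f.m = f.Qv := hcompl
        have hz2q : ((z1 : ℚ) - z2) = 4 * (c : ℚ) * f.Qv := by
          exact_mod_cast hz0
        rw [hz2q, hz']
        rw [hmq]; ring
      exact_mod_cast this
    show z ∈ K
    simp only [hK, Submodule.mem_comap, LinearMap.lsmul_apply, smul_eq_mul]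
    rw [heq]
    exact add_mem (Ideal.mul_mem_left _ _ hz'm) hz0m
  have hle : Ideal.span {z : ℤ | ∃ x : Fin n → ℤ, f.eval (fun i => (x i : ℚ)) = (z : ℚ)} ≤ K :=
    Ideal.span_le.mpr hSK
  rw [hprim.2] at hle
  have h1 : (1 : ℤ) ∈ K := hle trivial
  have h1' : (4 * (c : ℤ)) • (1 : ℤ) ∈ f.nZero := h1
  simpa using h1'
end
end

section
/- Let f be a primitive nondegenerate integral quadratic polynomial and let p be a prime. Then there exist an integer k with 0 ≤ k ≤ 1 + ord_p(𝔫₀(f)) + 2δ_{2,p} (where δ_{2,p} = 1 if p = 2 and 0 otherwise) and an element r ∈ ℤₚ such that f represents, over ℤₚ, every element of the coset r + p^k ℤₚ. -/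
noncomputable section

open Matrix

/-! Write `p ^ ν` for the exact power of `p` dividing `g`. Since `g` generates `𝔫₀(f)`, some
`a ∈ ℤⁿ` has `p ^ (ν + 1) ∤ f₀(a)`. On the line `x ↦ x • a` the polynomial `f` becomes
`A x² + B x + m` with `A + B = f₀(a)`, and for `t₀ = 0` or `t₀ = 1` the derivative `B + 2 A t₀`
is large compared with `A` (this is where `‖2‖ = p ^ (-δ_{2,p})` enters). Hensel's lemma then
shows that `f((t₀ + s) • a)`, `s ∈ ℤₚ`, runs through the whole coset
`f(t₀ • a) + p ^ (ν + 1 + 2δ_{2,p}) ℤₚ`. -/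

open Polynomial in
theorem PadicInt.exists_mul_sq_add_eq_one {p : ℕ} [Fact p.Prime] {c : ℤ_[p]} (hc : ‖c‖ < 1) :
    ∃ u : ℤ_[p], c * u ^ 2 + u = 1 := by
  set F : ℤ_[p][X] := C c * X ^ 2 + X - 1
  have hF : ∀ u, F.aeval u = c * u ^ 2 + u - 1 := fun u => by simp [F]
  have hF' : F.derivative.aeval (1 : ℤ_[p]) = 2 * c + 1 := by simp [F]; ring
  have h2c : ‖2 * c‖ < 1 := (norm_mul_le _ _).trans_lt
    (mul_lt_one_of_nonneg_of_lt_one_right (PadicInt.norm_le_one _) (norm_nonneg _) hc)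
  have hunit : ‖2 * c + 1‖ = 1 := by
    rw [IsUltrametricDist.norm_add_eq_max_of_norm_ne_norm (by simpa using h2c.ne), norm_one,
      max_eq_right h2c.le]
  have hnorm : ‖F.aeval (1 : ℤ_[p])‖ < ‖F.derivative.aeval (1 : ℤ_[p])‖ ^ 2 := by
    rw [hF, hF', hunit]; simpa using hc
  obtain ⟨u, hu, -⟩ := hensels_lemma hnorm
  exact ⟨u, by rw [hF] at hu; linear_combination hu⟩

theorem Padic.exists_mul_sq_add_mul_eq {p : ℕ} [Fact p.Prime] {A D w : ℚ_[p]} (hw : ‖w‖ ≤ ‖D‖)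
    (hAw : ‖A‖ * ‖w‖ < ‖D‖ ^ 2) : ∃ s : ℤ_[p], A * s ^ 2 + D * s = w := by
  have hD : D ≠ 0 := by
    rintro rfl
    rw [norm_zero, zero_pow two_ne_zero] at hAw
    exact hAw.not_ge (by positivity)
  have hc : ‖A * w / D ^ 2‖ < 1 := by
    rw [norm_div, norm_mul, norm_pow, div_lt_one (by positivity)]
    exact hAw
  obtain ⟨u, hu⟩ := PadicInt.exists_mul_sq_add_eq_one (c := ⟨_, hc.le⟩) hc
  have hs : ‖w / D * u‖ ≤ 1 := by
    rw [norm_mul, norm_div]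
    exact mul_le_one₀ ((div_le_one (by positivity)).2 hw) (by positivity) u.2
  -- `s = (w / D) u` turns `A s² + D s = w` into `c u² + u = 1` with `c = A w / D²`.
  refine ⟨⟨_, hs⟩, ?_⟩
  have hu' : A * w / D ^ 2 * (u : ℚ_[p]) ^ 2 + u = 1 := by
    exact_mod_cast congrArg ((↑) : ℤ_[p] → ℚ_[p]) hu
  show A * (w / D * u) ^ 2 + D * (w / D * u) = w
  field_simp
  field_simp at hu'
  linear_combination w * hu'

theorem IsUltrametricDist.exists_norm_le_norm_add_two_mul {K : Type*} [NormedField K]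
    [IsUltrametricDist K] {A B : K} {ε : ℝ} (hε : 0 ≤ ε) (hεAB : ε < ‖(2 : K)‖ ^ 2 * ‖A + B‖) :
    ∃ t ∈ ({0, 1} : Set K), ε ≤ ‖B + 2 * A * t‖ ∧ ‖A‖ * ε < ‖B + 2 * A * t‖ ^ 2 := by
  have h2 : ‖(2 : K)‖ ≤ 1 := by simpa using norm_natCast_le_one K 2
  rcases lt_or_ge ‖A‖ ‖B‖ with hAB | hBA
  · have hB : ‖A + B‖ = ‖B‖ := by
      rw [norm_add_eq_max_of_norm_ne_norm hAB.ne, max_eq_right hAB.le]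
    refine ⟨0, by simp, ?_⟩
    simp only [mul_zero, add_zero]
    rw [hB] at hεAB
    have hεB : ε ≤ ‖B‖ := by
      have h22 : ‖(2 : K)‖ ^ 2 ≤ 1 := pow_le_one₀ (norm_nonneg _) h2
      nlinarith [mul_le_mul_of_nonneg_right h22 (norm_nonneg B)]
    exact ⟨hεB, by nlinarith [norm_nonneg A]⟩
  · have hA : ε < ‖(2 : K)‖ ^ 2 * ‖A‖ := by
      refine hεAB.trans_le (mul_le_mul_of_nonneg_left ?_ (by positivity))
      exact (norm_add_le_max A B).trans (max_le le_rfl hBA)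
    obtain ⟨t, ht, h2A⟩ : ∃ t ∈ ({0, 1} : Set K), ‖(2 : K)‖ * ‖A‖ ≤ ‖B + 2 * A * t‖ := by
      have h : ‖(2 : K)‖ * ‖A‖ ≤ max ‖B + 2 * A‖ ‖B‖ := by
        simpa using norm_add_le_max (B + 2 * A) (-B)
      rcases le_max_iff.1 h with h | h
      · exact ⟨1, by simp, by simpa using h⟩
      · exact ⟨0, by simp, by simpa using h⟩
    refine ⟨t, ht, by nlinarith [norm_nonneg A, norm_nonneg (2 : K)], ?_⟩
    have hApos : 0 < ‖A‖ := by nlinarith [norm_nonneg A, norm_nonneg (2 : K)]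
    calc ‖A‖ * ε < ‖A‖ * (‖(2 : K)‖ ^ 2 * ‖A‖) := mul_lt_mul_of_pos_left hA hApos
      _ = (‖(2 : K)‖ * ‖A‖) ^ 2 := by ring
      _ ≤ ‖B + 2 * A * t‖ ^ 2 := pow_le_pow_left₀ (by positivity) h2A 2

theorem Padic.exists_coset_subset_range_quadratic {p : ℕ} [Fact p.Prime] {A B M : ℚ_[p]} {k : ℕ}
    (hM : ‖M‖ ≤ 1) (hAB : ‖A + B‖ ≤ 1)
    (hk : ‖(p : ℚ_[p]) ^ k‖ < ‖(2 : ℚ_[p])‖ ^ 2 * ‖A + B‖) :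
    ∃ r : ℤ_[p], ∀ t : ℤ_[p], ∃ x : ℤ_[p],
      A * x ^ 2 + B * x + M = r + (p : ℚ_[p]) ^ k * t := by
  obtain ⟨t₀, ht₀, hD, hAD⟩ :=
    IsUltrametricDist.exists_norm_le_norm_add_two_mul (norm_nonneg _) hk
  obtain ⟨T₀, rfl, hr⟩ : ∃ T₀ : ℤ_[p], (T₀ : ℚ_[p]) = t₀ ∧ ‖M + A * t₀ ^ 2 + B * t₀‖ ≤ 1 := by
    rcases ht₀ with rfl | rfl
    · exact ⟨0, by simp, by simpa using hM⟩
    · refine ⟨1, by simp, ?_⟩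
      rw [show M + A * 1 ^ 2 + B * 1 = M + (A + B) by ring]
      exact (IsUltrametricDist.norm_add_le_max _ _).trans (max_le hM hAB)
  refine ⟨⟨_, hr⟩, fun t => ?_⟩
  have hw : ‖(p : ℚ_[p]) ^ k * t‖ ≤ ‖(p : ℚ_[p]) ^ k‖ := by
    rw [norm_mul]
    exact mul_le_of_le_one_right (norm_nonneg _) t.2
  obtain ⟨s, hs⟩ := Padic.exists_mul_sq_add_mul_eq (hw.trans hD)
    ((mul_le_mul_of_nonneg_left hw (norm_nonneg A)).trans_lt hAD)
  refine ⟨T₀ + s, ?_⟩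
  push_cast
  linear_combination hs

theorem Padic.norm_two_eq (p : ℕ) [Fact p.Prime] :
    ‖(2 : ℚ_[p])‖ = ‖(p : ℚ_[p])‖ ^ (if p = 2 then 1 else 0) := by
  split_ifs with hp
  · subst hp
    simp
  · rw [pow_zero, ← Nat.cast_ofNat, Padic.norm_natCast_eq_one_iff]
    exact (Nat.coprime_primes Fact.out Nat.prime_two).2 hp

theorem Padic.norm_p_pow_lt_norm_intCast {p : ℕ} [Fact p.Prime] {z : ℤ} {ν : ℕ}
    (hz : ¬ (p : ℤ) ^ ν ∣ z) : ‖(p : ℚ_[p]) ^ ν‖ < ‖(z : ℚ_[p])‖ := by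
  rw [Padic.norm_p_pow]
  exact not_le.1 (mt (Padic.norm_int_le_pow_iff_dvd z ν).1 hz)

theorem Int.exists_mem_not_pow_dvd_of_span_eq {S : Set ℤ} {g : ℤ} (hg : g ≠ 0)
    (hS : Ideal.span S = Ideal.span {g}) {p : ℕ} (hp : p.Prime) :
    ∃ z ∈ S, ¬ (p : ℤ) ^ (g.natAbs.factorization p + 1) ∣ z := by
  by_contra! h
  have hle : Ideal.span S ≤ Ideal.span {(p : ℤ) ^ (g.natAbs.factorization p + 1)} :=
    Ideal.span_le.2 fun z hz => Ideal.mem_span_singleton.2 (h z hz)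
  have hdvd := Ideal.mem_span_singleton.1 (hle (hS ▸ Ideal.mem_span_singleton_self g))
  refine Nat.pow_succ_factorization_not_dvd (Int.natAbs_ne_zero.2 hg) hp ?_
  simpa [Int.natAbs_pow] using Int.natAbs_dvd_natAbs.2 hdvd

theorem QuadPoly.evalPadic_smul {n : ℕ} (f : QuadPoly n) (p : ℕ) [Fact p.Prime] (a : Fin n → ℚ)
    (c : ℚ_[p]) :
    f.evalPadic p (c • fun i => (a i : ℚ_[p])) =
      ((a ⬝ᵥ f.A *ᵥ a : ℚ) : ℚ_[p]) * c ^ 2 + ((f.b ⬝ᵥ a : ℚ) : ℚ_[p]) * c + f.m := by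
  have hcast : ∀ u v : Fin n → ℚ,
      ((u ⬝ᵥ v : ℚ) : ℚ_[p]) = (fun i => (u i : ℚ_[p])) ⬝ᵥ fun i => (v i : ℚ_[p]) :=
    fun u v => RingHom.map_dotProduct (Rat.castHom ℚ_[p]) u v
  have hmv : f.A.map ((↑) : ℚ → ℚ_[p]) *ᵥ (fun i => (a i : ℚ_[p])) =
      fun i => ((f.A *ᵥ a) i : ℚ_[p]) :=
    funext fun i => (RingHom.map_mulVec (Rat.castHom ℚ_[p]) f.A a i).symm
  rw [QuadPoly.evalPadic, mulVec_smul, hmv, hcast, hcast]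
  simp only [smul_dotProduct, dotProduct_smul, smul_eq_mul]
  ring

theorem stmt_3_general {n : ℕ} (f : QuadPoly n) (hint : f.Integral)
    (p : ℕ) [Fact p.Prime]
    (g : ℤ) (hgpos : 0 < g) (hgen : f.nZero = Ideal.span {g}) :
    ∃ k : ℕ, k ≤ 1 + g.natAbs.factorization p + 2 * (if p = 2 then 1 else 0) ∧
      ∃ r : ℤ_[p], ∀ t : ℤ_[p], ∃ x : Fin n → ℤ_[p],
        f.evalPadic p (fun i => (x i : ℚ_[p]))
          = (r : ℚ_[p]) + (p : ℚ_[p]) ^ k * (t : ℚ_[p]) := by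
  obtain ⟨d, ⟨a, ha⟩, hd⟩ :=
    Int.exists_mem_not_pow_dvd_of_span_eq hgpos.ne' hgen (Fact.out : p.Prime)
  obtain ⟨m, hm₀⟩ := hint 0
  set a' : Fin n → ℚ := fun i => (a i : ℚ)
  have hAB : ((a' ⬝ᵥ f.A *ᵥ a' : ℚ) : ℚ_[p]) + ((f.b ⬝ᵥ a' : ℚ) : ℚ_[p]) = d := by
    rw [← Rat.cast_add, ← Rat.cast_intCast, ← ha]
    simp [QuadPoly.eval, a']
  have hm : ((f.m : ℚ) : ℚ_[p]) = m := by
    simpa [QuadPoly.eval] using congrArg ((↑) : ℚ → ℚ_[p]) hm₀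
  have hk : ‖(p : ℚ_[p]) ^ (g.natAbs.factorization p + 1 + 2 * (if p = 2 then 1 else 0))‖ <
      ‖(2 : ℚ_[p])‖ ^ 2 * ‖(d : ℚ_[p])‖ := by
    calc _ = ‖(2 : ℚ_[p])‖ ^ 2 * ‖(p : ℚ_[p]) ^ (g.natAbs.factorization p + 1)‖ := by
          simp only [norm_pow, Padic.norm_two_eq]; ring
      _ < _ := mul_lt_mul_of_pos_left (Padic.norm_p_pow_lt_norm_intCast hd)
          (pow_pos (norm_pos_iff.2 two_ne_zero) 2)
  obtain ⟨r, hr⟩ := Padic.exists_coset_subset_range_quadratic (hm ▸ Padic.norm_int_le_one m)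
    (hAB ▸ Padic.norm_int_le_one d) (hAB ▸ hk)
  refine ⟨g.natAbs.factorization p + 1 + 2 * (if p = 2 then 1 else 0), by omega, r, fun t => ?_⟩
  obtain ⟨x, hx⟩ := hr t
  refine ⟨fun i => x * a i, ?_⟩
  rw [← hx, ← QuadPoly.evalPadic_smul]
  congr 1

/-- Let `f` be a primitive nondegenerate integral quadratic polynomial and
let `p` be a prime.  Then there exist an integer `k` with
`0 ≤ k ≤ 1 + ord_p(𝔫₀(f)) + 2δ_{2,p}` and an element `r ∈ ℤₚ` such that `f` represents,
over `ℤₚ`, every element of the coset `r + p^k ℤₚ`.  Here `𝔫₀(f) = (g)` with `g > 0`, and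
`ord_p(𝔫₀(f))` is the exponent of `p` in `g`. -/
theorem stmt_3 {n : ℕ} (f : QuadPoly n) (hnd : f.Nondegenerate) (hint : f.Integral)
    (hprim : f.Primitive) (p : ℕ) [Fact p.Prime]
    (g : ℤ) (hgpos : 0 < g) (hgen : f.nZero = Ideal.span {g}) :
    ∃ k : ℕ, k ≤ 1 + g.natAbs.factorization p + 2 * (if p = 2 then 1 else 0) ∧
      ∃ r : ℤ_[p], ∀ t : ℤ_[p], ∃ x : Fin n → ℤ_[p],
        f.evalPadic p (fun i => (x i : ℚ_[p]))
          = (r : ℚ_[p]) + (p : ℚ_[p]) ^ k * (t : ℚ_[p]) :=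
  stmt_3_general f hint p g hgpos hgen
end
end

section
/- Let f be a positive reduced ternary quadratic polynomial, let μ₁ ≤ μ₂ ≤ μ₃ be the successive minima of its quadratic part, and let a = (a₁,a₂,a₃) ∈ ℤ³. Then: (a) if |a₃| ≥ 9 then f(a) ≥ (3/2)μ₃; (b) if |a₃| ≤ 8 and |a₂| ≥ 22 then f(a) ≥ (7/2)μ₂; (c) if |a₃| ≤ 8 and |a₂| ≤ 21 then f(a) ≥ μ₁(a₁² − 30|a₁|); (d) if |a₃| ≤ 8, |a₂| ≤ 21 and |a₁| ≥ 31 then f(a) ≥ 31μ₁. -/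
noncomputable section

open Matrix

/-- A ternary quadratic polynomial over `ℚ`:
`f(x) = Q(x) + ℓ(x) + m` where `Q(x) = xᵀAx` for a symmetric matrix `A`,
`ℓ(x) = b ⬝ x` is a linear form and `m` is a constant. -/
structure QuadPoly3 where
  A : Matrix (Fin 3) (Fin 3) ℚ
  hA : A.IsSymm
  b : Fin 3 → ℚ
  m : ℚ

namespace QuadPoly3

/-- Evaluation of the quadratic polynomial at a rational point. -/
def eval (f : QuadPoly3) (x : Fin 3 → ℚ) : ℚ :=
  x ⬝ᵥ f.A.mulVec x + f.b ⬝ᵥ x + f.m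

/-- The quadratic part evaluated at a rational point. -/
def evalQ (f : QuadPoly3) (x : Fin 3 → ℚ) : ℚ := x ⬝ᵥ f.A.mulVec x

/-- `f` is positive: its quadratic part is positive definite and the minimum of `f`
on `ℤ³` is nonnegative. -/
def Positive (f : QuadPoly3) : Prop :=
  f.A.PosDef ∧ ∀ x : Fin 3 → ℤ, 0 ≤ f.eval (fun i => (x i : ℚ))

/-- The quadratic part of `f` is Minkowski reduced: for each `i`, `Q(eᵢ) ≤ Q(x)` for every
integer vector `x` whose coordinates `xᵢ, …, xₙ` have gcd `1`. -/
def MinkowskiReducedQ (f : QuadPoly3) : Prop :=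
  ∀ (i : Fin 3) (x : Fin 3 → ℤ),
    (Finset.univ.filter fun j => i ≤ j).gcd x = 1 →
      f.A i i ≤ f.evalQ (fun j => (x j : ℚ))

/-- `f` is (Minkowski) reduced: its quadratic part is Minkowski reduced and `f` attains its
minimum over `ℤ³` at the zero vector.  For such `f` the successive minima of the quadratic
part are the diagonal entries `μ₁ = A 0 0 ≤ μ₂ = A 1 1 ≤ μ₃ = A 2 2`. -/
def Reduced (f : QuadPoly3) : Prop :=
  f.MinkowskiReducedQ ∧ ∀ x : Fin 3 → ℤ, f.eval 0 ≤ f.eval (fun i => (x i : ℚ))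

end QuadPoly3

/-!
Since `f` is minimal at `0` and `f(0) ≥ 0`, adding `f(a - n) ≥ f(0)` and `f(n) ≥ f(0)` and using
the parallelogram law gives `f(a) ≥ (Q(a) - Q(a - 2n)) / 2` for every `n ∈ ℤ³`. Write `Q` in
Jacobi form `Q = μ₁ L₀² + π₁ L₁² + π₂ x₂²` with `L₀ = x₀ + (A₀₁ x₁ + A₀₂ x₂) / μ₁` and
`L₁ = x₁ + s x₂` (`lin₀`, `lin₁`, `pivot₁`, `pivot₂`, `lower₂₁` below); Minkowski reduction
gives `3μ₂/4 ≤ π₁ ≤ μ₂`, `|s| ≤ 1` and `μ₃/2 ≤ π₂`. For (a) take `n₂ = sign a₂`, for (b)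
`n = (n₀, sign a₁, 0)`, and choose the other coordinates of `n` by rounding so that
`|L₀(a - 2n)| ≤ 1` (and `|L₁(a - 2n)| ≤ 1` in (a)); then `Q(a) - Q(a - 2n)` is large.
For (c), `f(a) - f(0, a₁, a₂) = a₀ (μ₁ a₀ + 2A₀₁ a₁ + 2A₀₂ a₂ + b₀)` with
`|2A₀₁ a₁ + 2A₀₂ a₂ + b₀| ≤ (21 + 8 + 1) μ₁` and `f(0, a₁, a₂) ≥ 0`; (d) follows from (c).
-/

lemma exists_abs_sub_mul_le_half {K : Type*} [Field K] [LinearOrder K] [IsStrictOrderedRing K]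
    [FloorRing K] (t : K) {d : K} (hd : 0 < d) : ∃ k : ℤ, |t - d * k| ≤ d / 2 := by
  refine ⟨round (t / d), ?_⟩
  have h : t - d * round (t / d) = d * (t / d - round (t / d)) := by field_simp
  rw [h, abs_mul, abs_of_pos hd]
  nlinarith [abs_sub_round (t / d)]

section OrderedRing

variable {R : Type*} [CommRing R] [LinearOrder R] [IsStrictOrderedRing R]

lemma exists_abs_eq_one_and_mul_eq_abs (t : R) : ∃ ε : R, |ε| = 1 ∧ ε * t = |t| := by
  rcases abs_choice t with h | h
  · exact ⟨1, abs_one, by rw [h, one_mul]⟩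
  · exact ⟨-1, by rw [abs_neg, abs_one], by rw [h, neg_one_mul]⟩

lemma sq_sub_sq_sub_two_mul {ε : R} (hε : |ε| = 1) (u : R) :
    u ^ 2 - (u - 2 * ε) ^ 2 = 4 * (ε * u) - 4 := by
  have hε2 : ε ^ 2 = 1 := by rw [← sq_abs, hε, one_pow]
  linear_combination (-4) * hε2

lemma neg_le_mul_sq_sub_sq {c v : R} (hc : 0 ≤ c) (hv : |v| ≤ 1) (u : R) :
    -c ≤ c * (u ^ 2 - v ^ 2) := by
  have hcv : c * v ^ 2 ≤ c := mul_le_of_le_one_right hc ((sq_le_one_iff_abs_le_one v).2 hv)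
  nlinarith [mul_nonneg hc (sq_nonneg u)]

end OrderedRing

namespace QuadPoly3

variable (f : QuadPoly3)

lemma eval_eq_evalQ_add (x : Fin 3 → ℚ) : f.eval x = f.evalQ x + f.b ⬝ᵥ x + f.m := rfl

lemma eval_zero : f.eval 0 = f.m := by simp [eval]

lemma evalQ_eq (x : Fin 3 → ℚ) :
    f.evalQ x = f.A 0 0 * x 0 ^ 2 + f.A 1 1 * x 1 ^ 2 + f.A 2 2 * x 2 ^ 2
      + 2 * f.A 0 1 * x 0 * x 1 + 2 * f.A 0 2 * x 0 * x 2 + 2 * f.A 1 2 * x 1 * x 2 := by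
  simp only [evalQ, mulVec, dotProduct, Fin.sum_univ_three]
  rw [f.hA.apply 0 1, f.hA.apply 0 2, f.hA.apply 1 2]
  ring

lemma eval_eq_eval_update_zero_add (x : Fin 3 → ℚ) :
    f.eval x = f.eval (Function.update x 0 0)
      + x 0 * (f.A 0 0 * x 0 + (2 * f.A 0 1 * x 1 + 2 * f.A 0 2 * x 2 + f.b 0)) := by
  simp [eval_eq_evalQ_add, evalQ_eq, dotProduct, Fin.sum_univ_three]
  ring

lemma evalQ_add_add_evalQ_sub (x y : Fin 3 → ℚ) :
    f.evalQ (x + y) + f.evalQ (x - y) = 2 * f.evalQ x + 2 * f.evalQ y := by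
  simp only [evalQ, mulVec_add, mulVec_sub, dotProduct_add, add_dotProduct, dotProduct_sub,
    sub_dotProduct]
  ring

lemma half_sub_evalQ_le_eval {x y : Fin 3 → ℚ} (hm : 0 ≤ f.m)
    (hxy : f.m ≤ f.eval (x - y)) (hy : f.m ≤ f.eval y) :
    (f.evalQ x - f.evalQ (x - 2 • y)) / 2 ≤ f.eval x := by
  have h := f.evalQ_add_add_evalQ_sub (x - y) y
  rw [sub_add_cancel, sub_sub, ← two_nsmul] at h
  rw [eval_eq_evalQ_add] at hxy hy ⊢
  rw [dotProduct_sub] at hxy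
  linarith

def minor₂ : ℚ := f.A 0 0 * f.A 1 1 - f.A 0 1 ^ 2

def pivot₁ : ℚ := f.minor₂ / f.A 0 0

def pivot₂ : ℚ := f.A.det / f.minor₂

def lower₂₁ : ℚ := (f.A 0 0 * f.A 1 2 - f.A 0 1 * f.A 0 2) / f.minor₂

def lin₀ (x₀ x₁ x₂ : ℚ) : ℚ := x₀ + (f.A 0 1 * x₁ + f.A 0 2 * x₂) / f.A 0 0

def lin₁ (x₁ x₂ : ℚ) : ℚ := x₁ + f.lower₂₁ * x₂

lemma evalQ_eq_pivots (hα : f.A 0 0 ≠ 0) (hD : f.minor₂ ≠ 0) (x : Fin 3 → ℚ) :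
    f.evalQ x = f.A 0 0 * f.lin₀ (x 0) (x 1) (x 2) ^ 2 + f.pivot₁ * f.lin₁ (x 1) (x 2) ^ 2
      + f.pivot₂ * x 2 ^ 2 := by
  unfold minor₂ at hD
  rw [evalQ_eq, pivot₂, det_fin_three, f.hA.apply 0 1, f.hA.apply 0 2, f.hA.apply 1 2]
  simp only [lin₀, lin₁, pivot₁, lower₂₁, minor₂]
  field_simp
  ring

lemma sub_le_evalQ_sub_evalQ (hα : 0 < f.A 0 0) (hD : f.minor₂ ≠ 0) {x y : Fin 3 → ℚ}
    (hy : |f.lin₀ (y 0) (y 1) (y 2)| ≤ 1) :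
    f.pivot₁ * (f.lin₁ (x 1) (x 2) ^ 2 - f.lin₁ (y 1) (y 2) ^ 2)
      + f.pivot₂ * (x 2 ^ 2 - y 2 ^ 2) - f.A 0 0 ≤ f.evalQ x - f.evalQ y := by
  rw [f.evalQ_eq_pivots hα.ne' hD, f.evalQ_eq_pivots hα.ne' hD]
  linarith [neg_le_mul_sq_sub_sq hα.le hy (f.lin₀ (x 0) (x 1) (x 2))]

lemma exists_abs_lin₀_le (x₀ x₁ x₂ : ℚ) {d : ℚ} (hd : 0 < d) :
    ∃ k : ℤ, |f.lin₀ (x₀ - d * k) x₁ x₂| ≤ d / 2 := by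
  obtain ⟨k, hk⟩ := exists_abs_sub_mul_le_half (f.lin₀ x₀ x₁ x₂) hd
  exact ⟨k, by simpa only [lin₀, sub_add_eq_add_sub] using hk⟩

lemma exists_abs_lin₀_le_and_abs_lin₁_le (x₀ x₁ x₂ : ℚ) {d : ℚ} (hd : 0 < d) :
    ∃ k l : ℤ, |f.lin₀ (x₀ - d * k) (x₁ - d * l) x₂| ≤ d / 2 ∧
      |f.lin₁ (x₁ - d * l) x₂| ≤ d / 2 := by
  obtain ⟨l, hl⟩ := exists_abs_sub_mul_le_half (f.lin₁ x₁ x₂) hd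
  obtain ⟨k, hk⟩ := f.exists_abs_lin₀_le x₀ (x₁ - d * l) x₂ hd
  exact ⟨k, l, hk, by simpa only [lin₁, sub_add_eq_add_sub] using hl⟩

lemma pivot₁_le (hα : 0 < f.A 0 0) : f.pivot₁ ≤ f.A 1 1 := by
  rw [pivot₁, minor₂, div_le_iff₀ hα]
  nlinarith [sq_nonneg (f.A 0 1)]

namespace MinkowskiReducedQ

variable {f} (hmk : f.MinkowskiReducedQ)
include hmk

lemma diag_le_evalQ {i j : Fin 3} (hij : i ≤ j) {x : Fin 3 → ℤ} (hx : x j = 1) :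
    f.A i i ≤ f.evalQ (fun k => (x k : ℚ)) := by
  refine hmk i x ?_
  have hdvd : (Finset.univ.filter fun k => i ≤ k).gcd x ∣ 1 :=
    hx ▸ Finset.gcd_dvd (by simpa using hij)
  rw [← Finset.normalize_gcd, normalize_eq_one]
  exact isUnit_of_dvd_one hdvd

lemma diag_zero_le_diag_one : f.A 0 0 ≤ f.A 1 1 := by
  simpa [evalQ_eq] using hmk.diag_le_evalQ (i := 0) (j := 1) (x := ![0, 1, 0]) (by decide) rfl

lemma diag_one_le_diag_two : f.A 1 1 ≤ f.A 2 2 := by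
  simpa [evalQ_eq] using hmk.diag_le_evalQ (i := 1) (j := 2) (x := ![0, 0, 1]) (by decide) rfl

lemma two_mul_abs_A01_le : 2 * |f.A 0 1| ≤ f.A 0 0 := by
  have h₁ := hmk.diag_le_evalQ (i := 1) (j := 1) (x := ![1, 1, 0]) le_rfl rfl
  have h₂ := hmk.diag_le_evalQ (i := 1) (j := 1) (x := ![-1, 1, 0]) le_rfl rfl
  simp [evalQ_eq] at h₁ h₂
  rw [← abs_two, ← abs_mul, abs_le]
  constructor <;> linarith

lemma two_mul_abs_A02_le : 2 * |f.A 0 2| ≤ f.A 0 0 := by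
  have h₁ := hmk.diag_le_evalQ (i := 2) (j := 2) (x := ![1, 0, 1]) le_rfl rfl
  have h₂ := hmk.diag_le_evalQ (i := 2) (j := 2) (x := ![-1, 0, 1]) le_rfl rfl
  simp [evalQ_eq] at h₁ h₂
  rw [← abs_two, ← abs_mul, abs_le]
  constructor <;> linarith

lemma two_mul_abs_A12_le : 2 * |f.A 1 2| ≤ f.A 1 1 := by
  have h₁ := hmk.diag_le_evalQ (i := 2) (j := 2) (x := ![0, 1, 1]) le_rfl rfl
  have h₂ := hmk.diag_le_evalQ (i := 2) (j := 2) (x := ![0, -1, 1]) le_rfl rfl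
  simp [evalQ_eq] at h₁ h₂
  rw [← abs_two, ← abs_mul, abs_le]
  constructor <;> linarith

lemma diag_two_le_evalQ (k l : ℤ) : f.A 2 2 ≤ f.evalQ ![(k : ℚ), l, 1] := by
  convert hmk.diag_le_evalQ (i := 2) (j := 2) (x := ![k, l, 1]) le_rfl rfl using 2
  ext i
  fin_cases i <;> simp

variable (hα : 0 < f.A 0 0)
include hα

lemma four_mul_sq_A01_le : 4 * f.A 0 1 ^ 2 ≤ f.A 0 0 ^ 2 := by
  nlinarith [hmk.two_mul_abs_A01_le, sq_abs (f.A 0 1), abs_nonneg (f.A 0 1)]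

lemma minor₂_pos : 0 < f.minor₂ := by
  unfold minor₂
  nlinarith [hmk.four_mul_sq_A01_le hα, hmk.diag_zero_le_diag_one]

lemma pivot₁_pos : 0 < f.pivot₁ := div_pos (hmk.minor₂_pos hα) hα

lemma three_quarters_le_pivot₁ : 3 / 4 * f.A 1 1 ≤ f.pivot₁ := by
  rw [pivot₁, minor₂, le_div_iff₀ hα]
  nlinarith [hmk.four_mul_sq_A01_le hα, hmk.diag_zero_le_diag_one]

lemma abs_lower₂₁_le_one : |f.lower₂₁| ≤ 1 := by
  have hD := hmk.minor₂_pos hα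
  rw [lower₂₁, abs_div, abs_of_pos hD, div_le_one hD]
  have hr := hmk.two_mul_abs_A12_le
  have hp := hmk.two_mul_abs_A01_le
  have hq := hmk.two_mul_abs_A02_le
  have hαr : |f.A 0 0 * f.A 1 2| ≤ f.A 0 0 * (f.A 1 1 / 2) := by
    rw [abs_mul, abs_of_pos hα]
    gcongr
    linarith
  have hpq : |f.A 0 1 * f.A 0 2| ≤ (f.A 0 0 / 2) * (f.A 0 0 / 2) := by
    rw [abs_mul]
    gcongr <;> linarith
  calc |f.A 0 0 * f.A 1 2 - f.A 0 1 * f.A 0 2|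
      ≤ |f.A 0 0 * f.A 1 2| + |f.A 0 1 * f.A 0 2| := abs_sub _ _
    _ ≤ f.minor₂ := by
      unfold minor₂
      nlinarith [hmk.four_mul_sq_A01_le hα, hmk.diag_zero_le_diag_one]

-- At an integer point `(k, l, 1)` with `|L₀|, |L₁| ≤ 1/2`, reduction gives
-- `μ₃ ≤ Q(k, l, 1) ≤ μ₁/4 + π₁/4 + π₂`.
lemma half_diag_two_le_pivot₂ : f.A 2 2 / 2 ≤ f.pivot₂ := by
  obtain ⟨k, l, hk, hl⟩ := f.exists_abs_lin₀_le_and_abs_lin₁_le 0 0 1 one_pos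
  have h := hmk.diag_two_le_evalQ (-k) (-l)
  rw [f.evalQ_eq_pivots hα.ne' (hmk.minor₂_pos hα).ne'] at h
  simp only [Matrix.cons_val_zero, Matrix.cons_val_one, Matrix.cons_val_two, Matrix.head_cons,
    Matrix.tail_cons, Int.cast_neg] at h
  have hsq : ∀ t : ℚ, |t| ≤ 1 / 2 → t ^ 2 ≤ 1 / 4 := fun t ht => by
    nlinarith [abs_nonneg t, sq_abs t]
  have h₀ := mul_le_mul_of_nonneg_left (hsq _ (by simpa using hk)) hα.le
  have h₁ := mul_le_mul_of_nonneg_left (hsq _ (by simpa using hl)) (hmk.pivot₁_pos hα).le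
  linarith [f.pivot₁_le hα, hmk.diag_zero_le_diag_one, hmk.diag_one_le_diag_two]

end MinkowskiReducedQ

variable {f}

lemma Positive.diag_zero_pos (hpos : f.Positive) : 0 < f.A 0 0 := hpos.1.diag_pos

lemma Positive.m_nonneg (hpos : f.Positive) : 0 ≤ f.m := by
  simpa [eval_eq_evalQ_add, evalQ] using hpos.2 0

lemma Reduced.abs_b_zero_le (hred : f.Reduced) : |f.b 0| ≤ f.A 0 0 := by
  have h₁ := hred.2 ![1, 0, 0]
  have h₂ := hred.2 ![-1, 0, 0]
  simp [eval_eq_evalQ_add, evalQ_eq, dotProduct, Fin.sum_univ_three] at h₁ h₂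
  rw [abs_le]
  constructor <;> linarith

lemma Reduced.half_sub_evalQ_le_eval (hpos : f.Positive) (hred : f.Reduced) (a n : Fin 3 → ℤ) :
    (f.evalQ (fun i => (a i : ℚ)) - f.evalQ (fun i => (a i : ℚ) - 2 * n i)) / 2
      ≤ f.eval (fun i => (a i : ℚ)) := by
  have h := f.half_sub_evalQ_le_eval (x := fun i => (a i : ℚ)) (y := fun i => (n i : ℚ))
    hpos.m_nonneg (by rw [← eval_zero]; convert hred.2 (a - n) using 2; ext i; simp)
    (by simpa [eval_zero] using hred.2 n)
  convert h using 4
  ext i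
  simp [two_mul]

lemma Reduced.three_halves_diag_two_le_eval (hpos : f.Positive) (hred : f.Reduced)
    {a : Fin 3 → ℤ} (ha : 9 ≤ |a 2|) : 3 / 2 * f.A 2 2 ≤ f.eval (fun i => (a i : ℚ)) := by
  have hmk := hred.1
  have hα := hpos.diag_zero_pos
  obtain ⟨ε, hε, hεa⟩ := exists_abs_eq_one_and_mul_eq_abs (a 2)
  obtain ⟨k, l, hk, hl⟩ :=
    f.exists_abs_lin₀_le_and_abs_lin₁_le (a 0) (a 1) (a 2 - 2 * ε) two_pos
  have hmain := hred.half_sub_evalQ_le_eval hpos a ![k, l, ε]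
  have hest := f.sub_le_evalQ_sub_evalQ hα (hmk.minor₂_pos hα).ne'
    (x := fun i => (a i : ℚ)) (y := fun i => (a i : ℚ) - 2 * ((![k, l, ε] : Fin 3 → ℤ) i))
    (by simpa using hk)
  simp only [Matrix.cons_val_zero, Matrix.cons_val_one, Matrix.cons_val_two, Matrix.head_cons,
    Matrix.tail_cons] at hmain hest
  have hlin₁ := neg_le_mul_sq_sub_sq (hmk.pivot₁_pos hα).le
    (by simpa using hl) (f.lin₁ (a 1) (a 2))
  have hlast : (32 : ℚ) ≤ (a 2 : ℚ) ^ 2 - (a 2 - 2 * ε) ^ 2 := by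
    have : (32 : ℤ) ≤ a 2 ^ 2 - (a 2 - 2 * ε) ^ 2 := by
      rw [sq_sub_sq_sub_two_mul hε, hεa]
      linarith
    exact_mod_cast this
  have hγ : 0 < f.A 2 2 := by linarith [hmk.diag_zero_le_diag_one, hmk.diag_one_le_diag_two]
  have hpiv₂ := mul_le_mul_of_nonneg_left hlast
    (by linarith [hmk.half_diag_two_le_pivot₂ hα] : 0 ≤ f.pivot₂)
  linarith [f.pivot₁_le hα, hmk.half_diag_two_le_pivot₂ hα, hmk.diag_zero_le_diag_one,
    hmk.diag_one_le_diag_two]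

lemma Reduced.seven_halves_diag_one_le_eval (hpos : f.Positive) (hred : f.Reduced)
    {a : Fin 3 → ℤ} (ha₂ : |a 2| ≤ 8) (ha₁ : 22 ≤ |a 1|) :
    7 / 2 * f.A 1 1 ≤ f.eval (fun i => (a i : ℚ)) := by
  have hmk := hred.1
  have hα := hpos.diag_zero_pos
  obtain ⟨ε, hε, hεa⟩ := exists_abs_eq_one_and_mul_eq_abs (a 1)
  obtain ⟨k, hk⟩ := f.exists_abs_lin₀_le (a 0) (a 1 - 2 * ε) (a 2) two_pos
  have hmain := hred.half_sub_evalQ_le_eval hpos a ![k, ε, 0]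
  have hest := f.sub_le_evalQ_sub_evalQ hα (hmk.minor₂_pos hα).ne'
    (x := fun i => (a i : ℚ)) (y := fun i => (a i : ℚ) - 2 * ((![k, ε, 0] : Fin 3 → ℤ) i))
    (by simpa using hk)
  simp only [Matrix.cons_val_zero, Matrix.cons_val_one, Matrix.cons_val_two, Matrix.head_cons,
    Matrix.tail_cons, Int.cast_zero, mul_zero, sub_zero, sub_self] at hmain hest
  have hshear : |(ε : ℚ) * (f.lower₂₁ * a 2)| ≤ 8 := by
    rw [abs_mul, abs_mul, ← Int.cast_abs, hε, Int.cast_one, one_mul]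
    exact (mul_le_of_le_one_left (abs_nonneg _) (hmk.abs_lower₂₁_le_one hα)).trans
      (by exact_mod_cast ha₂)
  have hεlin₁ : 14 ≤ ε * f.lin₁ (a 1) (a 2) := by
    have hεa' : (ε : ℚ) * a 1 = |(a 1 : ℚ)| := by exact_mod_cast hεa
    have ha₁' : (22 : ℚ) ≤ |(a 1 : ℚ)| := by exact_mod_cast ha₁
    simp only [lin₁]
    linarith [neg_abs_le ((ε : ℚ) * (f.lower₂₁ * a 2))]
  have hlin₁ : 52 ≤ f.lin₁ (a 1) (a 2) ^ 2 - f.lin₁ (a 1 - 2 * ε) (a 2) ^ 2 := by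
    have hsub : f.lin₁ (a 1 - 2 * ε) (a 2) = f.lin₁ (a 1) (a 2) - 2 * ε := by
      simp only [lin₁]
      ring
    rw [hsub, sq_sub_sq_sub_two_mul (by exact_mod_cast hε)]
    linarith
  have hpiv₁ := mul_le_mul_of_nonneg_left hlin₁ (hmk.pivot₁_pos hα).le
  linarith [hmk.three_quarters_le_pivot₁ hα, hmk.diag_zero_le_diag_one]

lemma Reduced.diag_zero_mul_le_eval (hpos : f.Positive) (hred : f.Reduced)
    {a : Fin 3 → ℤ} (ha₂ : |a 2| ≤ 8) (ha₁ : |a 1| ≤ 21) :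
    f.A 0 0 * ((a 0 ^ 2 - 30 * |a 0| : ℤ) : ℚ) ≤ f.eval (fun i => (a i : ℚ)) := by
  have hmk := hred.1
  have hα := hpos.diag_zero_pos
  set t := 2 * f.A 0 1 * a 1 + 2 * f.A 0 2 * a 2 + f.b 0
  have ht : |t| ≤ 30 * f.A 0 0 := by
    have h₁ : |2 * f.A 0 1 * a 1| ≤ f.A 0 0 * 21 := by
      rw [abs_mul, abs_mul, abs_two, ← Int.cast_abs]
      exact mul_le_mul hmk.two_mul_abs_A01_le (by exact_mod_cast ha₁) (by positivity) hα.le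
    have h₂ : |2 * f.A 0 2 * a 2| ≤ f.A 0 0 * 8 := by
      rw [abs_mul, abs_mul, abs_two, ← Int.cast_abs]
      exact mul_le_mul hmk.two_mul_abs_A02_le (by exact_mod_cast ha₂) (by positivity) hα.le
    linarith [abs_add_three (2 * f.A 0 1 * a 1) (2 * f.A 0 2 * a 2) (f.b 0), hred.abs_b_zero_le]
  have hrest : 0 ≤ f.eval (Function.update (fun i => (a i : ℚ)) 0 0) := by
    convert hpos.2 (Function.update a 0 0) using 2
    ext i
    fin_cases i <;> simp
  have hlin : -(|(a 0 : ℚ)| * (30 * f.A 0 0)) ≤ a 0 * t := by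
    have := neg_abs_le ((a 0 : ℚ) * t)
    rw [abs_mul] at this
    linarith [mul_le_mul_of_nonneg_left ht (abs_nonneg (a 0 : ℚ))]
  rw [f.eval_eq_eval_update_zero_add]
  push_cast
  linarith

lemma Reduced.thirty_one_mul_diag_zero_le_eval (hpos : f.Positive) (hred : f.Reduced)
    {a : Fin 3 → ℤ} (ha₂ : |a 2| ≤ 8) (ha₁ : |a 1| ≤ 21) (ha₀ : 31 ≤ |a 0|) :
    31 * f.A 0 0 ≤ f.eval (fun i => (a i : ℚ)) := by
  have h : (31 : ℤ) ≤ a 0 ^ 2 - 30 * |a 0| := by nlinarith [sq_abs (a 0)]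
  calc 31 * f.A 0 0 ≤ f.A 0 0 * ((a 0 ^ 2 - 30 * |a 0| : ℤ) : ℚ) := by
        rw [mul_comm]
        gcongr
        · exact hpos.diag_zero_pos.le
        · exact_mod_cast h
    _ ≤ f.eval (fun i => (a i : ℚ)) := hred.diag_zero_mul_le_eval hpos ha₂ ha₁

end QuadPoly3

/-- Let `f` be a positive reduced ternary quadratic polynomial with
successive minima `μ₁ = A 0 0, μ₂ = A 1 1, μ₃ = A 2 2` of its quadratic part, and let
`a = (a₁, a₂, a₃) ∈ ℤ³`. Then:
(a) if `|a₃| ≥ 9` then `f(a) ≥ (3/2)μ₃`;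
(b) if `|a₃| ≤ 8` and `|a₂| ≥ 22` then `f(a) ≥ (7/2)μ₂`;
(c) if `|a₃| ≤ 8` and `|a₂| ≤ 21` then `f(a) ≥ μ₁(a₁² − 30|a₁|)`;
(d) if `|a₃| ≤ 8`, `|a₂| ≤ 21` and `|a₁| ≥ 31` then `f(a) ≥ 31 μ₁`. -/
theorem stmt_4 (f : QuadPoly3) (hpos : f.Positive) (hred : f.Reduced) (a : Fin 3 → ℤ) :
    (9 ≤ |a 2| → (3 / 2 : ℚ) * f.A 2 2 ≤ f.eval (fun i => (a i : ℚ))) ∧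
    (|a 2| ≤ 8 → 22 ≤ |a 1| → (7 / 2 : ℚ) * f.A 1 1 ≤ f.eval (fun i => (a i : ℚ))) ∧
    (|a 2| ≤ 8 → |a 1| ≤ 21 →
      f.A 0 0 * (((a 0) ^ 2 - 30 * |a 0| : ℤ) : ℚ) ≤ f.eval (fun i => (a i : ℚ))) ∧
    (|a 2| ≤ 8 → |a 1| ≤ 21 → 31 ≤ |a 0| →
      (31 : ℚ) * f.A 0 0 ≤ f.eval (fun i => (a i : ℚ))) :=
  ⟨hred.three_halves_diag_two_le_eval hpos, hred.seven_halves_diag_one_le_eval hpos,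
    hred.diag_zero_mul_le_eval hpos, hred.thirty_one_mul_diag_zero_le_eval hpos⟩
end
end

section
/- Let T be a finite set of primes with |T| = t ≥ 1, let p̃ be the smallest prime in T, let a be an integer not divisible by any prime in T, and let d be any integer. Then for every positive integer n, the number of integers in the set {d, a + d, 2a + d, …, (n−1)a + d} that are not divisible by any prime in T is at least n(p̃ − 1)/(p̃ + t − 1) − 2^t + 1. -/
/-!
For `S ⊆ T`, the terms `j a + d` divisible by every prime of `S` are those with `j` in a single
residue class modulo `∏ S` (as `a` is invertible there), so there are `n / ∏ S` of them up to an
error of at most `1`. Inclusion–exclusion over the subsets of `T` puts the number of terms coprime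
to `T` within `2^t - 1` of `n ∏_{p ∈ T} (1 - 1/p)`. Listing `T` as `p_1 < ⋯ < p_t`, we have
`p_i ≥ p̃ + i - 1`, and the product `∏ (1 - 1/(p̃ + i - 1))` telescopes to `(p̃ - 1)/(p̃ + t - 1)`.
-/

open Finset

theorem Finset.card_filter_forall_not_eq_sum_powerset {α ι : Type*} [DecidableEq ι]
    (A : Finset α) (T : Finset ι) (P : ι → α → Prop) [∀ i, DecidablePred (P i)] :
    (#{x ∈ A | ∀ i ∈ T, ¬ P i x} : ℤ) =
      ∑ S ∈ T.powerset, (-1 : ℤ) ^ #S * #{x ∈ A | ∀ i ∈ S, P i x} := by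
  have indicator_eq (x : α) :
      (if ∀ i ∈ T, ¬ P i x then 1 else 0 : ℤ) =
        ∑ S ∈ T.powerset, (-1) ^ #S * if ∀ i ∈ S, P i x then 1 else 0 := by
    have one_sub (i : ι) : (if ¬ P i x then 1 else 0 : ℤ) = 1 - if P i x then 1 else 0 := by
      split_ifs <;> simp
    simp only [← prod_boole, one_sub, prod_sub, prod_const_one, mul_one]
  simp only [natCast_card_filter, mul_sum]
  rw [sum_comm]
  exact sum_congr rfl fun x _ => indicator_eq x

theorem Finset.prod_one_sub_inv_eq_sum_powerset {ι K : Type*} [DecidableEq ι] [Field K]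
    (T : Finset ι) (f : ι → K) :
    ∏ i ∈ T, (1 - (f i)⁻¹) = ∑ S ∈ T.powerset, (-1) ^ #S * (∏ i ∈ S, f i)⁻¹ := by
  simp [prod_sub, prod_inv_distrib]

theorem div_le_one_sub_inv_mul_div {K : Type*} [Field K] [LinearOrder K] [IsStrictOrderedRing K]
    {c y a : K} (hc : 0 ≤ c) (hy : 1 < y) (hya : y ≤ a) :
    c / y ≤ (1 - a⁻¹) * (c / (y - 1)) := by
  have hy0 : 0 < y - 1 := by linarith
  calc c / y = (1 - y⁻¹) * (c / (y - 1)) := by field_simp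
    _ ≤ (1 - a⁻¹) * (c / (y - 1)) := by gcongr

theorem sub_one_div_le_prod_one_sub_inv {q : ℕ} (hq : 1 < q) (F : Finset ℕ)
    (hF : ∀ x ∈ F, q ≤ x) : ((q : ℚ) - 1) / (q + #F - 1) ≤ ∏ x ∈ F, (1 - (x : ℚ)⁻¹) := by
  have hqQ : (1 : ℚ) < q := by exact_mod_cast hq
  induction F using Finset.induction_on_max with
  | empty => simp [(sub_pos.2 hqQ).ne']
  | insert a s hlt ih =>
    have hs : s ⊆ Ico q a := fun x hx => mem_Ico.2 ⟨hF x (mem_insert_of_mem hx), hlt x hx⟩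
    have hcard : q + #s ≤ a := by
      have := card_le_card hs
      rw [Nat.card_Ico] at this
      have := hF a (mem_insert_self a s)
      omega
    have ha : a ∉ s := fun h => (hlt a h).false
    rw [card_insert_of_notMem ha, prod_insert ha]
    have hcardQ : (q : ℚ) + #s ≤ a := by exact_mod_cast hcard
    have ha0 : (0 : ℚ) ≤ 1 - (a : ℚ)⁻¹ := by
      rw [sub_nonneg]
      exact inv_le_one_of_one_le₀ (by linarith [(#s).cast_nonneg (α := ℚ)] : (1 : ℚ) ≤ a)
    calc ((q : ℚ) - 1) / (q + ↑(#s + 1) - 1) = ((q : ℚ) - 1) / (q + #s) := by push_cast; ring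
      _ ≤ (1 - (a : ℚ)⁻¹) * (((q : ℚ) - 1) / (q + #s - 1)) :=
        div_le_one_sub_inv_mul_div (by linarith) (by linarith [(#s).cast_nonneg (α := ℚ)]) hcardQ
      _ ≤ (1 - (a : ℚ)⁻¹) * ∏ x ∈ s, (1 - (x : ℚ)⁻¹) :=
        mul_le_mul_of_nonneg_left (ih fun x hx => hF x (mem_insert_of_mem hx)) ha0

theorem exists_forall_dvd_mul_add_iff_modEq {m : ℕ} [NeZero m] {a : ℤ} (ha : IsCoprime a m)
    (d : ℤ) : ∃ v : ℕ, ∀ j : ℕ, (m : ℤ) ∣ j * a + d ↔ j ≡ v [MOD m] := by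
  have hunit : IsUnit (a : ZMod m) := by
    simpa [isCoprime_zero_right] using ha.map (Int.castRingHom (ZMod m))
  refine ⟨(-(d : ZMod m) * ↑hunit.unit⁻¹).val, fun j => ?_⟩
  rw [← ZMod.intCast_zmod_eq_zero_iff_dvd, ← ZMod.natCast_eq_natCast_iff, ZMod.natCast_zmod_val,
    Units.eq_mul_inv_iff_mul_eq, IsUnit.unit_spec, eq_neg_iff_add_eq_zero]
  push_cast
  rfl

theorem abs_card_filter_modEq_sub_div_le_one (n m v : ℕ) (hm : 0 < m) :
    |(#{j ∈ range n | j ≡ v [MOD m]} : ℚ) - n / m| ≤ 1 := by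
  rw [← Nat.count_eq_card_filter_range, Nat.count_modEq_card _ hm]
  have hmQ : (0 : ℚ) < m := by exact_mod_cast hm
  have hdiv : (n : ℚ) / m = (n / m : ℕ) + (n % m : ℕ) / m := by
    rw [add_div_eq_mul_add_div _ _ hmQ.ne', div_left_inj' hmQ.ne', mul_comm]
    exact_mod_cast (Nat.div_add_mod n m).symm
  have hfrac : (n % m : ℕ) / (m : ℚ) < 1 := by
    rw [div_lt_one hmQ]; exact_mod_cast Nat.mod_lt n hm
  have hfrac' : 0 ≤ (n % m : ℕ) / (m : ℚ) := by positivity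
  rw [hdiv, abs_le]
  split_ifs <;> push_cast <;> constructor <;> linarith

theorem Int.natCast_prod_primes_dvd_iff {S : Finset ℕ} (hS : ∀ p ∈ S, p.Prime) (x : ℤ) :
    ((∏ p ∈ S, p : ℕ) : ℤ) ∣ x ↔ ∀ p ∈ S, (p : ℤ) ∣ x := by
  push_cast
  refine ⟨fun h p hp => (dvd_prod_of_mem _ hp).trans h, prod_dvd_of_coprime ?_⟩
  intro p hp p' hp' hne
  exact Nat.isCoprime_iff_coprime.2 ((Nat.coprime_primes (hS p hp) (hS p' hp')).2 hne)

theorem abs_card_filter_forall_dvd_sub_div_le_one {S : Finset ℕ} (hS : ∀ p ∈ S, p.Prime)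
    {a : ℤ} (ha : ∀ p ∈ S, ¬ (p : ℤ) ∣ a) (d : ℤ) (n : ℕ) :
    |(#{j ∈ range n | ∀ p ∈ S, (p : ℤ) ∣ ↑j * a + d} : ℚ) - n / ∏ p ∈ S, (p : ℚ)| ≤ 1 := by
  set m := ∏ p ∈ S, p
  have hm : 0 < m := prod_pos fun p hp => (hS p hp).pos
  have : NeZero m := ⟨hm.ne'⟩
  have hcop : IsCoprime a m := by
    push_cast [m]
    exact IsCoprime.prod_right fun p hp =>
      ((Nat.prime_iff_prime_int.1 (hS p hp)).coprime_iff_not_dvd.2 (ha p hp)).symm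
  obtain ⟨v, hv⟩ := exists_forall_dvd_mul_add_iff_modEq hcop d
  have hfilter : {j ∈ range n | ∀ p ∈ S, (p : ℤ) ∣ ↑j * a + d} = {j ∈ range n | j ≡ v [MOD m]} :=
    filter_congr fun j _ => (Int.natCast_prod_primes_dvd_iff hS _).symm.trans (hv j)
  rw [hfilter, ← Nat.cast_prod]
  exact abs_card_filter_modEq_sub_div_le_one n m v hm

theorem abs_card_filter_forall_not_dvd_sub_mul_prod_le {T : Finset ℕ} (hT : ∀ p ∈ T, p.Prime)
    {a : ℤ} (ha : ∀ p ∈ T, ¬ (p : ℤ) ∣ a) (d : ℤ) (n : ℕ) :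
    |(#{j ∈ range n | ∀ p ∈ T, ¬ (p : ℤ) ∣ ↑j * a + d} : ℚ) - n * ∏ p ∈ T, (1 - (p : ℚ)⁻¹)|
      ≤ 2 ^ #T - 1 := by
  set e : Finset ℕ → ℚ := fun S =>
    #{j ∈ range n | ∀ p ∈ S, (p : ℤ) ∣ ↑j * a + d} - n / ∏ p ∈ S, (p : ℚ)
  have he (S : Finset ℕ) (hS : S ∈ T.powerset) : |e S| ≤ 1 :=
    abs_card_filter_forall_dvd_sub_div_le_one (fun p hp => hT p (mem_powerset.1 hS hp))
      (fun p hp => ha p (mem_powerset.1 hS hp)) d n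
  have he_empty : e ∅ = 0 := by simp [e]
  have hsum : (#{j ∈ range n | ∀ p ∈ T, ¬ (p : ℤ) ∣ ↑j * a + d} : ℚ)
      - n * ∏ p ∈ T, (1 - (p : ℚ)⁻¹) = ∑ S ∈ T.powerset, (-1) ^ #S * e S := by
    rw [← Int.cast_natCast, card_filter_forall_not_eq_sum_powerset,
      prod_one_sub_inv_eq_sum_powerset, mul_sum, Int.cast_sum, ← sum_sub_distrib]
    refine sum_congr rfl fun S _ => ?_
    push_cast [e]
    ring
  rw [hsum]
  calc |∑ S ∈ T.powerset, (-1) ^ #S * e S| ≤ ∑ S ∈ T.powerset, |e S| := by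
        refine (abs_sum_le_sum_abs _ _).trans_eq (sum_congr rfl fun S _ => ?_)
        rw [abs_mul, abs_pow, abs_neg, abs_one, one_pow, one_mul]
    _ = ∑ S ∈ T.powerset.erase ∅, |e S| := by
        rw [sum_erase _ (by rw [he_empty, abs_zero])]
    _ ≤ #(T.powerset.erase ∅) • (1 : ℚ) :=
        sum_le_card_nsmul _ _ _ fun S hS => he S (mem_of_mem_erase hS)
    _ = 2 ^ #T - 1 := by
        rw [card_erase_of_mem (empty_mem_powerset T), card_powerset, nsmul_one,
          Nat.cast_sub Nat.one_le_two_pow]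
        push_cast; ring

theorem stmt_6_general (T : Finset ℕ) (hT : ∀ p ∈ T, p.Prime) (hne : T.Nonempty)
    (a d : ℤ) (ha : ∀ p ∈ T, ¬ ((p : ℤ) ∣ a)) (n : ℕ) :
    ((n : ℚ) * ((T.min' hne : ℚ) - 1) / ((T.min' hne : ℚ) + (T.card : ℚ) - 1)
        - 2 ^ T.card + 1)
      ≤ (({j : ℕ | j < n ∧ ∀ p ∈ T, ¬ ((p : ℤ) ∣ ((j : ℤ) * a + d))}.ncard : ℚ)) := by
  have hset : {j : ℕ | j < n ∧ ∀ p ∈ T, ¬ ((p : ℤ) ∣ ((j : ℤ) * a + d))}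
      = ↑{j ∈ range n | ∀ p ∈ T, ¬ (p : ℤ) ∣ ↑j * a + d} := by
    ext j; simp
  have hprod := sub_one_div_le_prod_one_sub_inv (hT _ (T.min'_mem hne)).one_lt T
    fun p hp => T.min'_le p hp
  have herr := abs_le.1 (abs_card_filter_forall_not_dvd_sub_mul_prod_le hT ha d n)
  rw [hset, Set.ncard_coe_finset, mul_div_assoc]
  linarith [mul_le_mul_of_nonneg_left hprod n.cast_nonneg (α := ℚ)]

/-- Let `T` be a finite set of primes with `|T| = t ≥ 1`, let `p̃` be the
smallest prime in `T`, let `a` be an integer not divisible by any prime in `T`, and let `d` be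
any integer.  Then for every positive integer `n`, the number of integers among
`d, a + d, 2a + d, …, (n-1)a + d` that are not divisible by any prime in `T` is at least
`n(p̃ − 1)/(p̃ + t − 1) − 2^t + 1`. -/
theorem stmt_6 (T : Finset ℕ) (hT : ∀ p ∈ T, p.Prime) (hne : T.Nonempty)
    (a d : ℤ) (ha : ∀ p ∈ T, ¬ ((p : ℤ) ∣ a)) (n : ℕ) (hn : 0 < n) :
    ((n : ℚ) * ((T.min' hne : ℚ) - 1) / ((T.min' hne : ℚ) + (T.card : ℚ) - 1)
        - 2 ^ T.card + 1)
      ≤ (({j : ℕ | j < n ∧ ∀ p ∈ T, ¬ ((p : ℤ) ∣ ((j : ℤ) * a + d))}.ncard : ℚ)) :=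
  stmt_6_general T hT hne a d ha n
end

section
/- Let m ≥ 3. If two m-gonal forms Δ_m(a₁,…,aₙ) and Δ_m(a′₁,…,a′ₙ) in n variables are equivalent as quadratic polynomials, then they are equal up to a permutation of the variables; that is, (a′₁,…,a′ₙ) is a permutation of (a₁,…,aₙ). -/
/-!
Taking second differences, an equivalence of `m`-gonal forms (`m ≠ 2`) yields an isometry
`T ∈ GLₙ(ℤ)` between the diagonal quadratic forms `⟨a'⟩` and `⟨a⟩`. An integral vector of
`⟨a⟩`-norm at most `c` is supported on the coordinates `j` with `a j ≤ c`, so the rows `T i` with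
`a' i ≤ c`, which have norm `a' i`, are linearly independent vectors in a lattice of rank
`#{j | a j ≤ c}`. Applying this also to `T⁻¹`, the counts `#{i | a' i ≤ c}` and `#{j | a j ≤ c}`
agree for every `c`, hence so do all multiplicities.
-/

noncomputable section

open Matrix

/-- The `m`-gonal form `Δ_m(a₁, …, aₙ)` in `n` variables, as a quadratic polynomial
`x ↦ Σᵢ aᵢ·((m−2)xᵢ² − (m−4)xᵢ)/2` over `ℚ`. -/
def mgonal (m : ℕ) {n : ℕ} (a : Fin n → ℕ) (x : Fin n → ℚ) : ℚ :=
  ∑ i, (a i : ℚ) * (((m : ℚ) - 2) * (x i) ^ 2 - ((m : ℚ) - 4) * x i) / 2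

open Finset QuadraticMap

section DiagonalForm

variable {ι : Type*} [Fintype ι]

lemma le_weightedSumSquares_of_ne_zero (a : ι → ℕ) {v : ι → ℤ} {j : ι} (hj : v j ≠ 0) :
    (a j : ℤ) ≤ weightedSumSquares ℤ a v := by
  have hsq : 1 ≤ v j * v j := by nlinarith [Int.one_le_abs hj, abs_mul_abs_self (v j)]
  rw [weightedSumSquares_apply]
  calc (a j : ℤ) ≤ a j • (v j * v j) := by rw [nsmul_eq_mul]; nlinarith
    _ ≤ ∑ i, a i • (v i * v i) :=
      single_le_sum (fun i _ => nsmul_nonneg (mul_self_nonneg (v i)) _) (mem_univ j)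

variable [DecidableEq ι]

lemma card_le_card_of_rows_supported {T : Matrix ι ι ℤ} (hT : IsUnit T)
    {s t : Finset ι} (hst : ∀ i ∈ s, ∀ j ∉ t, T i j = 0) : #s ≤ #t := by
  have hli : LinearIndependent ℤ fun (i : s) (j : t) => T i j := by
    rw [Fintype.linearIndependent_iff]
    intro g hg
    have hrows := (linearIndependent_rows_of_isUnit hT).comp ((↑) : s → ι) Subtype.val_injective
    refine Fintype.linearIndependent_iff.mp hrows g (funext fun j => ?_)
    by_cases hj : j ∈ t
    · simpa using congrFun hg ⟨j, hj⟩
    · simp [hst _ (coe_mem _) j hj]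
  simpa using hli.fintype_card_le_finrank

variable {a a' : ι → ℕ} {T : Matrix ι ι ℤ}

lemma card_filter_le_le_of_isometry (hT : IsUnit T)
    (hQ : ∀ x, weightedSumSquares ℤ a' x = weightedSumSquares ℤ a (x ᵥ* T)) (c : ℕ) :
    #{i | a' i ≤ c} ≤ #{j | a j ≤ c} := by
  refine card_le_card_of_rows_supported hT fun i hi j hj => ?_
  by_contra hij
  have hrow : weightedSumSquares ℤ a (T.row i) = a' i := by
    rw [← single_one_vecMul, ← hQ]
    simp [Pi.single_apply]
  have hle := le_weightedSumSquares_of_ne_zero a (v := T.row i) hij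
  simp only [mem_filter, mem_univ, true_and, not_le] at hi hj
  omega

lemma card_filter_le_eq_of_isometry (hT : IsUnit T)
    (hQ : ∀ x, weightedSumSquares ℤ a' x = weightedSumSquares ℤ a (x ᵥ* T)) (c : ℕ) :
    #{i | a' i ≤ c} = #{j | a j ≤ c} := by
  have hdet : IsUnit T.det := (isUnit_iff_isUnit_det T).mp hT
  refine (card_filter_le_le_of_isometry hT hQ c).antisymm
    (card_filter_le_le_of_isometry (isUnit_nonsing_inv_iff.mpr hT) (fun x => ?_) c)
  rw [hQ, vecMul_vecMul, nonsing_inv_mul T hdet, vecMul_one]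

end DiagonalForm

section Fibers

variable {ι : Type*} [Fintype ι] {f g : ι → ℕ}

lemma card_filter_eq_eq_of_card_filter_le_eq (h : ∀ c, #{i | f i ≤ c} = #{i | g i ≤ c}) (c : ℕ) :
    #{i | f i = c} = #{i | g i = c} := by
  classical
  have hsplit (φ : ι → ℕ) : #{i | φ i = c} + #{i | φ i < c} = #{i | φ i ≤ c} := by
    rw [← card_union_of_disjoint (disjoint_filter.mpr fun i _ h => h.not_lt), ← filter_or]
    simp only [le_iff_eq_or_lt]
  have hlt : #{i | f i < c} = #{i | g i < c} := by
    cases c with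
    | zero => simp
    | succ k => simpa only [Nat.lt_succ_iff] using h k
  have hf := hsplit f
  have hg := hsplit g
  have hle := h c
  omega

lemma exists_perm_of_card_filter_eq_eq (h : ∀ c, #{i | f i = c} = #{i | g i = c}) :
    ∃ σ : Equiv.Perm ι, ∀ i, f i = g (σ i) := by
  classical
  let e c : {i // f i = c} ≃ {i // g i = c} :=
    Fintype.equivOfCardEq (by simpa only [Fintype.card_subtype] using h c)
  exact ⟨Equiv.ofFiberEquiv e, fun i => (Equiv.ofFiberEquiv_map e i).symm⟩

end Fibers

lemma mgonal_second_difference (m : ℕ) {n : ℕ} (a : Fin n → ℕ) (v u : Fin n → ℚ) :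
    mgonal m a ((2 : ℚ) • v + u) - 2 * mgonal m a (v + u) + mgonal m a u
      = ((m : ℚ) - 2) * ∑ i, (a i : ℚ) * v i ^ 2 := by
  simp only [mgonal, Pi.add_apply, Pi.smul_apply, smul_eq_mul, mul_sum, ← sum_sub_distrib,
    ← sum_add_distrib]
  exact sum_congr rfl fun i _ => by ring

lemma weightedSumSquares_eq_of_mgonal_eq {m n : ℕ} (hm : m ≠ 2) {a a' : Fin n → ℕ}
    {T : Matrix (Fin n) (Fin n) ℤ} {u : Fin n → ℚ}
    (h : ∀ x, mgonal m a' x = mgonal m a (x ᵥ* T.map ((↑) : ℤ → ℚ) + u)) (x : Fin n → ℤ) :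
    weightedSumSquares ℤ a' x = weightedSumSquares ℤ a (x ᵥ* T) := by
  have hm2 : (m : ℚ) - 2 ≠ 0 := sub_ne_zero.mpr (by exact_mod_cast hm)
  have hQ (y : Fin n → ℚ) :
      ∑ i, (a' i : ℚ) * y i ^ 2 = ∑ i, (a i : ℚ) * (y ᵥ* T.map (↑)) i ^ 2 := by
    have h' := mgonal_second_difference m a' y 0
    rw [add_zero, add_zero, h, h, h, smul_vecMul, zero_vecMul, zero_add,
      mgonal_second_difference] at h'
    exact mul_left_cancel₀ hm2 h'.symm
  have hcast (j : Fin n) : ((x ᵥ* T) j : ℚ) = ((fun i => (x i : ℚ)) ᵥ* T.map (↑)) j :=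
    RingHom.map_vecMul (Int.castRingHom ℚ) T x j
  apply Int.cast_injective (α := ℚ)
  simpa [weightedSumSquares_apply, hcast, ← _root_.sq] using hQ (fun i => x i)

theorem stmt_16_general (m : ℕ) (hm : 3 ≤ m) (n : ℕ) (a a' : Fin n → ℕ)
    (heq : ∃ T : Matrix (Fin n) (Fin n) ℤ, IsUnit T.det ∧ ∃ u : Fin n → ℤ,
      ∀ x : Fin n → ℚ,
        mgonal m a' x = mgonal m a (x ᵥ* T.map ((↑) : ℤ → ℚ) + fun i => (u i : ℚ))) :
    ∃ σ : Equiv.Perm (Fin n), ∀ i, a' i = a (σ i) := by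
  obtain ⟨T, hdet, u, hpoly⟩ := heq
  have hQ := weightedSumSquares_eq_of_mgonal_eq (by omega) hpoly
  exact exists_perm_of_card_filter_eq_eq <| card_filter_eq_eq_of_card_filter_le_eq <|
    card_filter_le_eq_of_isometry ((isUnit_iff_isUnit_det T).mpr hdet) hQ

/-- Let `m ≥ 3`.  If two `m`-gonal forms `Δ_m(a₁, …, aₙ)` and
`Δ_m(a′₁, …, a′ₙ)` in `n` variables (with positive integer coefficients) are equivalent as
quadratic polynomials, i.e. `Δ_m(a′)(x) = Δ_m(a)(xT + u)` for some `T ∈ GLₙ(ℤ)` and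
`u ∈ ℤⁿ`, then `(a′₁, …, a′ₙ)` is a permutation of `(a₁, …, aₙ)`. -/
theorem stmt_16 (m : ℕ) (hm : 3 ≤ m) (n : ℕ) (a a' : Fin n → ℕ)
    (ha : ∀ i, 0 < a i) (ha' : ∀ i, 0 < a' i)
    (heq : ∃ T : Matrix (Fin n) (Fin n) ℤ, IsUnit T.det ∧ ∃ u : Fin n → ℤ,
      ∀ x : Fin n → ℚ,
        mgonal m a' x = mgonal m a (x ᵥ* T.map ((↑) : ℤ → ℚ) + fun i => (u i : ℚ))) :
    ∃ σ : Equiv.Perm (Fin n), ∀ i, a' i = a (σ i) :=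
  stmt_16_general m hm n a a' heq
end
end
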